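/- arXiv:1001.4701 — 5 statements merged into one kernel-verified Lean document; each statement's English description precedes it below -/
import Mathlib

section
/- For any elements A, B₁, B₂, B₃ of an associative algebra, A ⋄ Sym₃(B₁,B₂,B₃) = Sym₄(A,B₁,B₂,B₃) + (1/12){ B₁⋄([[A,B₂],B₃]+[[A,B₃],B₂]) + B₂⋄([[A,B₁],B₃]+[[A,B₃],B₁]) + B₃⋄([[A,B₁],B₂]+[[A,B₂],B₁]) }. -/
/-- Commutator in an associative ring. -/
def brk {A : Type*} [Ring A] (a b : A) : A := a * b - b * a

/-- Symmetrized product of two elements. -/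
def dia {A : Type*} [Ring A] [Algebra ℚ A] (a b : A) : A := (2⁻¹ : ℚ) • (a * b + b * a)

/-- Fully symmetrized product of a list of elements: the average of the products
over all orderings of the list. -/
def symP {A : Type*} [Ring A] [Algebra ℚ A] (L : List A) : A :=
  ((L.length.factorial : ℚ)⁻¹) • ((L.permutations.map List.prod).sum)


lemma symP_eq {A : Type*} [Ring A] [Algebra ℚ A] (L : List A) :
    symP L = ((L.length.factorial : ℚ)⁻¹) • ((L.permutations'.map List.prod).sum) := by
  unfold symP
  rw [((L.permutations_perm_permutations').map List.prod).sum_eq]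

theorem stmt4 {A : Type*} [Ring A] [Algebra ℚ A] (a b₁ b₂ b₃ : A) :
    dia a (symP [b₁, b₂, b₃])
      = symP [a, b₁, b₂, b₃]
        + (12⁻¹ : ℚ) •
          (dia b₁ (brk (brk a b₂) b₃ + brk (brk a b₃) b₂)
            + dia b₂ (brk (brk a b₁) b₃ + brk (brk a b₃) b₁)
            + dia b₃ (brk (brk a b₁) b₂ + brk (brk a b₂) b₁)) := by
  simp only [brk, dia, symP_eq, List.permutations', List.permutations'Aux, List.map_cons,
    List.map_nil, List.flatMap_cons, List.flatMap_nil, List.append_nil, List.sum_cons,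
    List.sum_nil, List.prod_cons, List.prod_nil, List.length_cons, List.length_nil,
    List.sum_append, List.map_append]
  norm_num [Nat.factorial]
  simp only [mul_add, add_mul, mul_sub, sub_mul, mul_assoc, smul_add, smul_sub, mul_one, one_mul,
    mul_smul_comm, smul_mul_assoc, smul_smul, add_zero]
  module
end

section
/- Define the defect A_k(C₀; C₁,…,C_k) = C₀ ⋄ Sym_k(C₁,…,C_k) − Sym_{k+1}(C₀,…,C_k). Then the cyclic-type sum A_k(C₀; C₁,…,C_k) + A_k(C₁; C₀,C₂,…,C_k) + ⋯ + A_k(C_k; C₁,…,C_{k−1},C₀) vanishes. -/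
/-- The defect `A_k(C₀; C₁,…,C_k) = C₀ ⋄ Sym_k(C₁,…,C_k) − Sym_{k+1}(C₀,C₁,…,C_k)`. -/
def Adef {A : Type*} [Ring A] [Algebra ℚ A] (c₀ : A) (Cs : List A) : A :=
  dia c₀ (symP Cs) - symP (c₀ :: Cs)

open List Equiv

theorem List.reverse_ofFn {α : Type*} {n : ℕ} (f : Fin n → α) :
    (ofFn f).reverse = ofFn (f ∘ Fin.rev) := by
  refine List.ext_getElem (by simp) fun i hi _ => ?_
  simp only [length_reverse, length_ofFn] at hi
  simp only [List.getElem_reverse, List.getElem_ofFn, length_ofFn, Function.comp_apply]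
  congr 1
  ext
  simp
  omega

/-- `List.permutations` lists a permutation of a list with repeated entries once per rearrangement
of positions; over the repetition-free `finRange n` these rearrangements are `Equiv.Perm (Fin n)`. -/
theorem List.sum_map_permutations_finRange {M : Type*} [AddCommMonoid M] {n : ℕ}
    (g : List (Fin n) → M) :
    ((finRange n).permutations.map g).sum = ∑ σ : Equiv.Perm (Fin n), g (ofFn ⇑σ) := by
  classical
  let e : Equiv.Perm (Fin n) ↪ List (Fin n) :=
    ⟨fun σ => ofFn ⇑σ, ofFn_injective.comp DFunLike.coe_injective⟩
  have hnodup := nodup_permutations _ (nodup_finRange n)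
  have himage : Finset.univ.map e = (finRange n).permutations.toFinset := by
    refine Finset.eq_of_subset_of_card_le (fun l hl => ?_) ?_
    · obtain ⟨σ, -, rfl⟩ := Finset.mem_map.mp hl
      simpa [e, mem_permutations, ← ofFn_id] using σ.ofFn_comp_perm id
    · simp [toFinset_card_of_nodup hnodup, length_permutations, Fintype.card_perm]
  rw [← sum_toFinset g hnodup, ← himage, Finset.sum_map]
  rfl

section PermProdSum

variable {R : Type*} [Semiring R]

def permProdSum {n : ℕ} (C : Fin n → R) : R := ∑ σ : Equiv.Perm (Fin n), (ofFn (C ∘ σ)).prod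

theorem sum_map_prod_permutations_ofFn {n : ℕ} (C : Fin n → R) :
    ((ofFn C).permutations.map prod).sum = permProdSum C := by
  rw [ofFn_eq_map, ← map_permutations, map_map, sum_map_permutations_finRange]
  simp [permProdSum, map_ofFn]

theorem permProdSum_comp_perm {n : ℕ} (C : Fin n → R) (τ : Equiv.Perm (Fin n)) :
    permProdSum (C ∘ τ) = permProdSum C :=
  Equiv.sum_comp (Equiv.mulLeft τ) fun σ => (ofFn (C ∘ σ)).prod

theorem permProdSum_succ_left {n : ℕ} (C : Fin (n + 1) → R) :
    permProdSum C = ∑ i, C i * permProdSum (Fin.tail (C ∘ swap 0 i)) := by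
  rw [permProdSum, ← Equiv.sum_comp Equiv.Perm.decomposeFin.symm, Fintype.sum_prod_type]
  refine Fintype.sum_congr _ _ fun i => ?_
  simp [permProdSum, Finset.mul_sum, ofFn_succ, Function.comp_def, Fin.tail]

theorem op_permProdSum {n : ℕ} (C : Fin n → R) :
    MulOpposite.op (permProdSum C) = permProdSum (MulOpposite.op ∘ C) := by
  rw [permProdSum, Finset.op_sum, permProdSum, ← Equiv.sum_comp (Equiv.mulRight Fin.revPerm)]
  refine Fintype.sum_congr _ _ fun σ => ?_
  rw [MulOpposite.op_list_prod, map_ofFn, reverse_ofFn]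
  congr 2
  ext j
  simp

theorem permProdSum_succ_right {n : ℕ} (C : Fin (n + 1) → R) :
    permProdSum C = ∑ i, permProdSum (Fin.tail (C ∘ swap 0 i)) * C i := by
  apply MulOpposite.op_injective
  rw [op_permProdSum, permProdSum_succ_left, Finset.op_sum]
  refine Fintype.sum_congr _ _ fun i => ?_
  rw [MulOpposite.op_mul, op_permProdSum]
  rfl

end PermProdSum

section Symmetrization

variable {A : Type*} [Ring A] [Algebra ℚ A]

theorem symP_ofFn {n : ℕ} (C : Fin n → A) :
    symP (ofFn C) = (n.factorial : ℚ)⁻¹ • permProdSum C := by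
  rw [symP, length_ofFn, sum_map_prod_permutations_ofFn]

theorem sum_dia_symP_tail {k : ℕ} (C : Fin (k + 1) → A) :
    ∑ i, dia (C i) (symP (ofFn (Fin.tail (C ∘ swap 0 i)))) =
      (k.factorial : ℚ)⁻¹ • permProdSum C := by
  simp only [dia, symP_ofFn, mul_smul_comm, smul_mul_assoc, ← smul_add, ← Finset.smul_sum,
    Finset.sum_add_distrib, ← permProdSum_succ_left, ← permProdSum_succ_right, smul_smul]
  rw [← two_smul ℚ, smul_smul]
  congr 1
  ring

theorem sum_symP_ofFn_comp_swap {k : ℕ} (C : Fin (k + 1) → A) :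
    ∑ i, symP (ofFn (C ∘ swap 0 i)) = (k.factorial : ℚ)⁻¹ • permProdSum C := by
  simp only [symP_ofFn, permProdSum_comp_perm, Finset.sum_const, Finset.card_univ,
    Fintype.card_fin, ← Nat.cast_smul_eq_nsmul ℚ, smul_smul, Nat.factorial_succ]
  congr 1
  have : (k.factorial : ℚ) ≠ 0 := by positivity
  field_simp
  push_cast
  ring

end Symmetrization

theorem stmt6 {A : Type*} [Ring A] [Algebra ℚ A] {k : ℕ} (C : Fin (k + 1) → A) :
    ∑ i : Fin (k + 1),
        Adef (C i) (List.ofFn fun j : Fin k => Function.update C i (C 0) j.succ) = 0 := by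
  have htail (i : Fin (k + 1)) :
      (fun j : Fin k => Function.update C i (C 0) j.succ) = Fin.tail (C ∘ swap 0 i) := by
    ext j
    rcases eq_or_ne j.succ i with rfl | hj
    · simp [Fin.tail]
    · simp [Fin.tail, hj, swap_apply_of_ne_of_ne (Fin.succ_ne_zero j) hj]
  have hcons (i : Fin (k + 1)) : C i :: ofFn (Fin.tail (C ∘ swap 0 i)) = ofFn (C ∘ swap 0 i) := by
    rw [ofFn_succ (f := C ∘ swap 0 i)]
    simp only [Function.comp_apply, swap_apply_left]
    rfl
  simp only [Adef, htail, hcons, Finset.sum_sub_distrib, sum_dia_symP_tail,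
    sum_symP_ofFn_comp_swap, sub_self]
end

section
/- Special case of the Wick formula for l=2, m=3: if [L_i, M_j] = d_{ij}·1 for all i ∈ {1,2}, j ∈ {1,2,3}, then Sym₂(L₁,L₂)Sym₃(M₁,M₂,M₃) = Sym₅(L₁,L₂,M₁,M₂,M₃) + (1/2)[d₁₁Sym₃(L₂,M₂,M₃) + d₁₂Sym₃(L₂,M₁,M₃) + d₁₃Sym₃(L₂,M₁,M₂) + d₂₁Sym₃(L₁,M₂,M₃) + d₂₂Sym₃(L₁,M₁,M₃) + d₂₃Sym₃(L₁,M₁,M₂)] + (1/4)[(d₁₁d₂₂+d₁₂d₂₁)M₃ + (d₁₁d₂₃+d₁₃d₂₁)M₂ + (d₁₂d₂₃+d₁₃d₂₂)M₁]. -/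
lemma swap {A : Type*} [Ring A] [Algebra ℚ A] {l m : A} {d : ℚ}
    (h : brk l m = d • (1 : A)) :
    (∀ x : A, l * (m * x) = m * (l * x) + d • x) ∧ l * m = m * l + d • (1 : A) := by
  have h' : l * m = m * l + d • (1 : A) := by
    have := h; unfold brk at this; linear_combination (norm := module) this
  refine ⟨fun x => ?_, h'⟩
  rw [← mul_assoc, h', add_mul, smul_mul_assoc, one_mul, mul_assoc]

set_option maxHeartbeats 2000000 in
theorem stmt11 {A : Type*} [Ring A] [Algebra ℚ A]
    (L₁ L₂ M₁ M₂ M₃ : A) (d₁₁ d₁₂ d₁₃ d₂₁ d₂₂ d₂₃ : ℚ)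
    (h₁₁ : brk L₁ M₁ = d₁₁ • (1 : A)) (h₁₂ : brk L₁ M₂ = d₁₂ • (1 : A))
    (h₁₃ : brk L₁ M₃ = d₁₃ • (1 : A)) (h₂₁ : brk L₂ M₁ = d₂₁ • (1 : A))
    (h₂₂ : brk L₂ M₂ = d₂₂ • (1 : A)) (h₂₃ : brk L₂ M₃ = d₂₃ • (1 : A)) :
    symP [L₁, L₂] * symP [M₁, M₂, M₃]
      = symP [L₁, L₂, M₁, M₂, M₃]
        + (2⁻¹ : ℚ) •
          (d₁₁ • symP [L₂, M₂, M₃] + d₁₂ • symP [L₂, M₁, M₃] + d₁₃ • symP [L₂, M₁, M₂]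
            + d₂₁ • symP [L₁, M₂, M₃] + d₂₂ • symP [L₁, M₁, M₃] + d₂₃ • symP [L₁, M₁, M₂])
        + (4⁻¹ : ℚ) •
          ((d₁₁ * d₂₂ + d₁₂ * d₂₁) • M₃ + (d₁₁ * d₂₃ + d₁₃ * d₂₁) • M₂
            + (d₁₂ * d₂₃ + d₁₃ * d₂₂) • M₁) := by
  obtain ⟨w₁₁, v₁₁⟩ := swap h₁₁
  obtain ⟨w₁₂, v₁₂⟩ := swap h₁₂
  obtain ⟨w₁₃, v₁₃⟩ := swap h₁₃
  obtain ⟨w₂₁, v₂₁⟩ := swap h₂₁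
  obtain ⟨w₂₂, v₂₂⟩ := swap h₂₂
  obtain ⟨w₂₃, v₂₃⟩ := swap h₂₃
  simp only [symP_eq, List.permutations', List.permutations'Aux, List.flatMap_cons,
    List.flatMap_nil, List.map_cons, List.map_nil, List.append_nil, List.cons_append,
    List.nil_append, List.prod_cons, List.prod_nil, List.sum_cons, List.sum_nil,
    List.length_cons, List.length_nil, Nat.factorial, mul_one, add_zero]
  simp only [w₁₁, w₁₂, w₁₃, w₂₁, w₂₂, w₂₃, v₁₁, v₁₂, v₁₃, v₂₁, v₂₂, v₂₃,
    mul_assoc, mul_add, add_mul, smul_add, mul_smul_comm, smul_mul_assoc, smul_smul,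
    mul_one, one_mul]
  push_cast
  match_scalars <;> ring
end

section
/- The recursively defined coefficients c₁ = 1/12, c_h = −(1/(2h+1)) Σ_{i=1}^{h−1} c_i c_{h−i} (h > 1) coincide with B_{2h}/(2h)! for all h ≥ 1, where B_n denotes the n-th Bernoulli number. -/
/-!
With `B = X/(eˣ - 1)` the Bernoulli generating function, differentiating `B (eˣ - 1) = X` gives
the Riccati equation `X B' = B - B² - X B`. The shift `E = B + X/2 = (X/2) coth (X/2)` removes the
only odd coefficient and turns it into `X E' = E - E² + X²/4`. Since `E` is even, comparing the
coefficients of `X^(2h)` for `h ≥ 2` gives `2h e_h = e_h - 2 e_h - ∑_{0<i<h} e_i e_{h-i}`, with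
`e_h = B_{2h}/(2h)!` and `e_0 = 1`: this is the recursion of the `c_h`.
-/

open PowerSeries Finset

namespace Finset.Nat

theorem sum_antidiagonal_two_mul_of_odd {M : Type*} [AddCommMonoid M] (f : ℕ → ℕ → M)
    (hf : ∀ i j, Odd i → f i j = 0) (n : ℕ) :
    ∑ p ∈ antidiagonal (2 * n), f p.1 p.2 = ∑ p ∈ antidiagonal n, f (2 * p.1) (2 * p.2) := by
  symm
  refine sum_of_injOn (fun p => (2 * p.1, 2 * p.2)) ?_ ?_ ?_ fun _ _ => rfl
  · intro p _ q _ hpq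
    simp only [Prod.mk.injEq] at hpq
    ext <;> omega
  · intro p hp
    simp only [mem_coe, HasAntidiagonal.mem_antidiagonal] at hp ⊢
    omega
  · rintro ⟨i, j⟩ hij hnot
    rcases Nat.even_or_odd i with ⟨a, rfl⟩ | hi
    · rw [HasAntidiagonal.mem_antidiagonal] at hij
      exact absurd ⟨(a, n - a), by simp; omega, by simp; omega⟩ hnot
    · exact hf i j hi

theorem sum_antidiagonal_eq_add_add_sum_Ico {M : Type*} [AddCommMonoid M] (f : ℕ → ℕ → M)
    {n : ℕ} (hn : 1 ≤ n) :
    ∑ p ∈ antidiagonal n, f p.1 p.2 = f 0 n + f n 0 + ∑ i ∈ Ico 1 n, f i (n - i) := by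
  rw [sum_antidiagonal_eq_sum_range_succ f, sum_range_succ, range_eq_Ico,
    sum_eq_sum_Ico_succ_bot (by omega), Nat.sub_zero, Nat.sub_self]
  abel

end Finset.Nat

theorem PowerSeries.coeff_X_mul_derivative {R : Type*} [CommSemiring R] (f : R⟦X⟧) (n : ℕ) :
    coeff n (X * d⁄dX R f) = n * coeff n f := by
  cases n with
  | zero => simp
  | succ m => rw [coeff_succ_X_mul, coeff_derivative, mul_comm, Nat.cast_succ]

theorem X_mul_derivative_bernoulliPowerSeries (A : Type*) [CommRing A] [Algebra ℚ A] :
    X * d⁄dX A (bernoulliPowerSeries A)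
      = bernoulliPowerSeries A - bernoulliPowerSeries A ^ 2 - X * bernoulliPowerSeries A := by
  set B := bernoulliPowerSeries A
  have hB : B * (exp A - 1) = X := bernoulliPowerSeries_mul_exp_sub_one A
  have hB' : B * exp A + (exp A - 1) * d⁄dX A B = 1 := by
    simpa [Derivation.leibniz, derivative_exp, mul_comm] using congrArg (d⁄dX A) hB
  rw [← hB]
  linear_combination B * hB'

noncomputable def evenBernoulliPowerSeries : ℚ⟦X⟧ := bernoulliPowerSeries ℚ + C (1 / 2 : ℚ) * X

theorem X_mul_derivative_evenBernoulliPowerSeries :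
    X * d⁄dX ℚ evenBernoulliPowerSeries
      = evenBernoulliPowerSeries - evenBernoulliPowerSeries ^ 2 + C (1 / 4 : ℚ) * X ^ 2 := by
  have hB := X_mul_derivative_bernoulliPowerSeries ℚ
  have two_mul_half : 2 * C (1 / 2 : ℚ) = 1 := by rw [← map_ofNat C 2, ← map_mul]; norm_num
  have half_mul_half : C (1 / 2 : ℚ) * C (1 / 2) = C (1 / 4) := by rw [← map_mul]; norm_num
  simp only [evenBernoulliPowerSeries, map_add, Derivation.leibniz, derivative_X, derivative_C,
    smul_eq_mul, mul_one, mul_zero, add_zero]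
  linear_combination hB + X * bernoulliPowerSeries ℚ * two_mul_half + X ^ 2 * half_mul_half

theorem coeff_evenBernoulliPowerSeries_of_odd {n : ℕ} (hn : Odd n) :
    coeff n evenBernoulliPowerSeries = 0 := by
  rcases eq_or_ne n 1 with rfl | hn1
  · simp [evenBernoulliPowerSeries, bernoulliPowerSeries, bernoulli_one]
    norm_num
  · simp [evenBernoulliPowerSeries, bernoulliPowerSeries, coeff_X, hn1,
      bernoulli_eq_zero_of_odd hn (by grind)]

theorem coeff_evenBernoulliPowerSeries_two_mul (n : ℕ) :
    coeff (2 * n) evenBernoulliPowerSeries = bernoulli (2 * n) / (2 * n).factorial := by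
  simp [evenBernoulliPowerSeries, bernoulliPowerSeries, coeff_X]

theorem coeff_two_mul_evenBernoulliPowerSeries_sq {h : ℕ} (hh : 1 ≤ h) :
    coeff (2 * h) (evenBernoulliPowerSeries ^ 2)
      = 2 * coeff (2 * h) evenBernoulliPowerSeries + ∑ i ∈ Ico 1 h,
          coeff (2 * i) evenBernoulliPowerSeries * coeff (2 * (h - i)) evenBernoulliPowerSeries := by
  set E := evenBernoulliPowerSeries
  have hE0 : coeff (2 * 0) E = 1 := by rw [coeff_evenBernoulliPowerSeries_two_mul]; simp
  rw [pow_two, coeff_mul, Nat.sum_antidiagonal_two_mul_of_odd (fun i j => coeff i E * coeff j E)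
      (fun i j hi => by rw [coeff_evenBernoulliPowerSeries_of_odd hi, zero_mul]),
    Nat.sum_antidiagonal_eq_add_add_sum_Ico (fun i j => coeff (2 * i) E * coeff (2 * j) E) hh, hE0]
  ring

theorem bernoulli_two_mul_div_factorial_eq_sum {h : ℕ} (hh : 1 < h) :
    bernoulli (2 * h) / ((2 * h).factorial : ℚ)
      = -(1 / ((2 * h + 1 : ℕ) : ℚ)) * ∑ i ∈ Ico 1 h,
          bernoulli (2 * i) / ((2 * i).factorial : ℚ)
            * (bernoulli (2 * (h - i)) / ((2 * (h - i)).factorial : ℚ)) := by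
  have hcoeff := congrArg (coeff (2 * h)) X_mul_derivative_evenBernoulliPowerSeries
  have hX2 : coeff (2 * h) (C (1 / 4 : ℚ) * X ^ 2) = 0 := by
    rw [coeff_C_mul_X_pow, if_neg (by omega)]
  rw [coeff_X_mul_derivative, map_add, map_sub, coeff_two_mul_evenBernoulliPowerSeries_sq hh.le,
    hX2] at hcoeff
  simp only [coeff_evenBernoulliPowerSeries_two_mul, Nat.cast_mul, Nat.cast_ofNat] at hcoeff
  have hne : ((2 * h + 1 : ℕ) : ℚ) ≠ 0 := by positivity
  apply mul_left_cancel₀ hne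
  rw [← mul_assoc, mul_neg, mul_one_div_cancel hne, neg_one_mul]
  push_cast
  linear_combination hcoeff

theorem stmt16 (c : ℕ → ℚ) (h1 : c 1 = 1 / 12)
    (hrec : ∀ h : ℕ, 1 < h →
      c h = -(1 / ((2 * h + 1 : ℕ) : ℚ)) * ∑ i ∈ Finset.Ico 1 h, c i * c (h - i)) :
    ∀ h : ℕ, 1 ≤ h → c h = bernoulli (2 * h) / ((2 * h).factorial : ℚ) := by
  intro h
  induction h using Nat.strong_induction_on with
  | _ h ih =>
    intro hh
    rcases eq_or_lt_of_le hh with rfl | hlt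
    · rw [h1, Nat.mul_one, bernoulli_two]
      norm_num [Nat.factorial]
    · rw [hrec h hlt, bernoulli_two_mul_div_factorial_eq_sum hlt]
      refine congrArg _ (sum_congr rfl fun i hi => ?_)
      rw [mem_Ico] at hi
      rw [ih i hi.2 hi.1, ih (h - i) (by omega) (by omega)]
end

section
/- Let B₁,…,B_l be elements of an associative algebra with [B_i,B_j] = c_{ij}·1 for scalars c_{ij}, and suppose H is a quadratic noncommutative expression H = Σ_{i≤j} a_{ij} B_i ⋄ B_j + Σ_j b_j B_j + c·1 with scalar coefficients. If F = Sym_m(B_{j₁},…,B_{j_m}) is any symmetrized monomial, then [H, F] is again a linear combination of symmetrized monomials of degree m in the B's, with coefficients obtained by the Leibniz rule from the classical Poisson bracket: explicitly [H,F] equals the symmetrization (at B) of {h, f}, where h = Σ a_{ij} y_i y_j + Σ b_j y_j + c, f = y_{j₁}⋯y_{j_m} are polynomials in commuting variables y and {g₁,g₂} := Σ_{i,j} c_{ij} ∂g₁/∂y_i ∂g₂/∂y_j. -/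
open MvPolynomial in
/-- Symmetrization at `B` of a commutative polynomial: each monomial
`y_{i₁}⋯y_{i_k}` is sent to `Sym_k(B_{i₁},…,B_{i_k})`, extended linearly. -/
noncomputable def symmQ {A : Type*} [Ring A] [Algebra ℚ A] {l : ℕ} (B : Fin l → A)
    (P : MvPolynomial (Fin l) ℚ) : A :=
  (AddMonoidAlgebra.coeff P).sum fun mono coeff =>
    coeff • symP ((List.ofFn fun i => List.replicate (mono i) (B i)).flatten)

open MvPolynomial in
/-- The constant-case Poisson bracket `{g₁,g₂} = Σ_{i,j} c_{ij} ∂g₁/∂y_i ∂g₂/∂y_j`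
on commutative polynomials. -/
noncomputable def poisC {l : ℕ} (c : Fin l → Fin l → ℚ)
    (g₁ g₂ : MvPolynomial (Fin l) ℚ) : MvPolynomial (Fin l) ℚ :=
  ∑ i : Fin l, ∑ j : Fin l, C (c i j) * pderiv i g₁ * pderiv j g₂


namespace List

variable {α : Type*}

def picks : List α → List (α × List α)
  | [] => []
  | a :: t => (a, t) :: (picks t).map fun p => (p.1, a :: p.2)

theorem perm_of_mem_picks {L : List α} {p : α × List α} (hp : p ∈ L.picks) :
    (p.1 :: p.2) ~ L := by
  induction L generalizing p with
  | nil => simp [picks] at hp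
  | cons a t ih =>
    simp only [picks, mem_cons, mem_map] at hp
    rcases hp with rfl | ⟨q, hq, rfl⟩
    · rfl
    · exact (Perm.swap a q.1 q.2).trans ((ih hq).cons a)

theorem fst_mem_of_mem_picks {L : List α} {p : α × List α} (hp : p ∈ L.picks) : p.1 ∈ L :=
  (perm_of_mem_picks hp).subset mem_cons_self

theorem snd_subset_of_mem_picks {L : List α} {p : α × List α} (hp : p ∈ L.picks) : p.2 ⊆ L :=
  fun _ ha => (perm_of_mem_picks hp).subset (mem_cons_of_mem _ ha)

theorem length_picks (L : List α) : L.picks.length = L.length := by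
  induction L with
  | nil => rfl
  | cons a t ih => simp [picks, ih]

variable {M : Type*} [AddCommMonoid M]

theorem sum_map_smul {R ι : Type*} [Monoid R] [DistribMulAction R M] (r : R) (L : List ι)
    (f : ι → M) : (L.map fun i => r • f i).sum = r • (L.map f).sum := by
  rw [smul_sum, map_map]; rfl

theorem sum_map_flatMap {β : Type*} (L : List β) (g : β → List α) (f : α → M) :
    ((L.flatMap g).map f).sum = (L.map fun b => ((g b).map f).sum).sum := by
  simp [flatMap_def, sum_flatten, map_flatten, Function.comp_def]

theorem sum_map_permutations'_cons (y : α) (L : List α) (f : List α → M) :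
    ((y :: L).permutations'.map f).sum =
      ((y :: L).picks.map fun p => (p.2.permutations'.map fun t => f (p.1 :: t)).sum).sum := by
  induction L generalizing y f with
  | nil => simp [permutations', picks, permutations'Aux]
  | cons a L ih =>
    -- `permutations'` inserts `y` at every position; inserting into `b :: t` either puts `y`
    -- first or keeps `b` first, and the latter terms are regrouped by the induction hypothesis.
    let g : List α → M
      | [] => 0
      | b :: t => ((permutations'Aux y t).map fun s => f (b :: s)).sum
    have hins : ∀ σ, ((permutations'Aux y σ).map f).sum = f (y :: σ) + g σ := by
      rintro (_ | ⟨b, t⟩)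
      · simp [permutations'Aux, g]
      · simp [permutations'Aux, g, Function.comp_def]
    have hg := ih a g
    simp only [g, ← sum_map_flatMap] at hg
    rw [show (y :: a :: L).permutations' = (a :: L).permutations'.flatMap (permutations'Aux y)
      from rfl, sum_map_flatMap, map_congr_left fun σ _ => hins σ, sum_map_add, hg]
    simp [picks, Function.comp_def, permutations']

theorem sum_map_permutations_cons (y : α) (L : List α) (f : List α → M) :
    ((y :: L).permutations.map f).sum =
      ((y :: L).picks.map fun p => (p.2.permutations.map fun t => f (p.1 :: t)).sum).sum := by
  simp only [((permutations_perm_permutations' _).map _).sum_eq, sum_map_permutations'_cons]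

end List

section Commutator

variable {A : Type*} [Ring A]

theorem brk_add_left (a b x : A) : brk (a + b) x = brk a x + brk b x := by
  unfold brk; noncomm_ring

theorem brk_add_right (x a b : A) : brk x (a + b) = brk x a + brk x b := by
  unfold brk; noncomm_ring

theorem brk_add_brk_swap (a b : A) : brk a b + brk b a = 0 := by
  unfold brk; noncomm_ring

theorem brk_of_mem_center_left {z : A} (hz : z ∈ Set.center A) (x : A) : brk z x = 0 := by
  rw [brk, Semigroup.mem_center_iff.mp hz, sub_self]

theorem brk_of_mem_center_right {z : A} (hz : z ∈ Set.center A) (x : A) : brk x z = 0 := by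
  rw [brk, Semigroup.mem_center_iff.mp hz, sub_self]

def CommutatorsCentral (L : List A) : Prop :=
  ∀ a ∈ L, ∀ b ∈ L, brk a b ∈ Set.center A

theorem CommutatorsCentral.subset {L L' : List A} (hL : CommutatorsCentral L) (h : L' ⊆ L) :
    CommutatorsCentral L' :=
  fun a ha b hb => hL a (h ha) b (h hb)

theorem commutatorsCentral_of_subset_range {ι : Type*} {B : ι → A}
    (hB : ∀ i j, brk (B i) (B j) ∈ Set.center A)
    {L : List A} (hL : ∀ a ∈ L, a ∈ Set.range B) : CommutatorsCentral L := by
  intro a ha b hb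
  obtain ⟨i, rfl⟩ := hL a ha
  obtain ⟨j, rfl⟩ := hL b hb
  exact hB i j

end Commutator

section SymmetrizedProduct

variable {A : Type*} [Ring A] [Algebra ℚ A]

theorem brk_smul_left (q : ℚ) (a x : A) : brk (q • a) x = q • brk a x := by
  unfold brk; rw [smul_mul_assoc, mul_smul_comm, smul_sub]

theorem brk_smul_right (q : ℚ) (x a : A) : brk x (q • a) = q • brk x a := by
  unfold brk; rw [smul_mul_assoc, mul_smul_comm, smul_sub]

theorem dia_add_right (x a b : A) : dia x (a + b) = dia x a + dia x b := by
  unfold dia; rw [← smul_add]; congr 1; noncomm_ring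

theorem dia_smul_right (q : ℚ) (x a : A) : dia x (q • a) = q • dia x a := by
  unfold dia; rw [mul_smul_comm, smul_mul_assoc, ← smul_add, smul_comm]

theorem dia_one_right (x : A) : dia x 1 = x := by
  rw [dia, mul_one, one_mul, ← two_smul ℚ, smul_smul]; norm_num

theorem dia_list_sum {ι : Type*} (x : A) (L : List ι) (g : ι → A) :
    dia x (L.map g).sum = (L.map fun i => dia x (g i)).sum := by
  induction L with
  | nil => simp [dia]
  | cons i L ih => simp [dia_add_right, ih]

theorem dia_of_mem_center_left {z : A} (hz : z ∈ Set.center A) (x : A) : dia z x = z * x := by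
  rw [dia, ← Semigroup.mem_center_iff.mp hz, ← two_smul ℚ, smul_smul]; norm_num

theorem dia_mul_of_mem_center {z : A} (hz : z ∈ Set.center A) (x a : A) :
    dia x (z * a) = z * dia x a := by
  rw [dia, dia, mul_smul_comm, mul_add, ← mul_assoc, Semigroup.mem_center_iff.mp hz, mul_assoc,
    mul_assoc]

theorem mul_eq_dia_add_brk (a b : A) : a * b = dia a b + (2⁻¹ : ℚ) • brk a b := by
  rw [dia, brk, ← smul_add, show a * b + b * a + (a * b - b * a) = (2 : ℚ) • (a * b) by
    rw [two_smul]; abel, smul_smul]; norm_num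

theorem brk_dia_right (x a b : A) : brk x (dia a b) = dia (brk x a) b + dia a (brk x b) := by
  unfold dia; rw [brk_smul_right, ← smul_add]; congr 1; unfold brk; noncomm_ring

theorem brk_dia_left (a b x : A) : brk (dia a b) x = dia a (brk b x) + dia b (brk a x) := by
  unfold dia; rw [brk_smul_left, ← smul_add]; congr 1; unfold brk; noncomm_ring

theorem dia_left_comm {x y : A} (hxy : brk x y ∈ Set.center A) (a : A) :
    dia x (dia y a) = dia y (dia x a) := by
  have h := (Semigroup.mem_center_iff.mp hxy a).symm
  unfold brk at h
  unfold dia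
  simp only [mul_smul_comm, smul_mul_assoc, ← smul_add]
  congr 2
  rw [← sub_eq_zero] at h ⊢
  rw [← h]
  noncomm_ring

end SymmetrizedProduct

section SymP

variable {A : Type*} [Ring A] [Algebra ℚ A]

theorem symP_perm {L L' : List A} (h : L.Perm L') : symP L = symP L' := by
  rw [symP, symP, h.length_eq, (h.permutations.map _).sum_eq]

theorem symP_nil : symP ([] : List A) = 1 := by
  simp [symP]

theorem sum_map_prod_permutations (L : List A) :
    (L.permutations.map List.prod).sum = L.length.factorial • symP L := by
  rw [symP, ← Nat.cast_smul_eq_nsmul ℚ, smul_smul,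
    mul_inv_cancel₀ (Nat.cast_ne_zero.mpr L.length.factorial_ne_zero), one_smul]

theorem sum_picks_mul_symP (K : List A) :
    (K.picks.map fun p => p.1 * symP p.2).sum = K.length • symP K := by
  cases K with
  | nil => simp [List.picks]
  | cons x L =>
    have hgroup := List.sum_map_permutations_cons x L List.prod
    have hinner : ∀ p ∈ (x :: L).picks,
        (p.2.permutations.map fun t => (p.1 :: t).prod).sum =
          L.length.factorial • (p.1 * symP p.2) := by
      intro p hp
      have hlen : p.2.length = L.length := by simpa using (List.perm_of_mem_picks hp).length_eq
      simp only [List.prod_cons, List.sum_map_mul_left, sum_map_prod_permutations, hlen,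
        mul_smul_comm]
    have := IsAddTorsionFree.of_module_rat A
    apply nsmul_right_injective L.length.factorial_ne_zero
    dsimp only
    rw [← List.sum_map_smul, ← List.map_congr_left hinner, ← hgroup,
      sum_map_prod_permutations, smul_smul, List.length_cons, Nat.factorial_succ, mul_comm]

end SymP

section CentralCommutators

variable {A : Type*} [Ring A] [Algebra ℚ A]

def diaFold (L : List A) : A := L.foldr dia 1

theorem diaFold_cons (x : A) (L : List A) : diaFold (x :: L) = dia x (diaFold L) := rfl

theorem brk_diaFold {x : A} {L : List A} (hx : ∀ a ∈ L, brk x a ∈ Set.center A) :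
    brk x (diaFold L) = (L.picks.map fun q => brk x q.1 * diaFold q.2).sum := by
  induction L with
  | nil => simp [diaFold, brk, List.picks]
  | cons y L ih =>
    have hL : ∀ a ∈ L, brk x a ∈ Set.center A := fun a ha => hx a (List.mem_cons_of_mem y ha)
    have hcomm : ∀ q ∈ L.picks,
        dia y (brk x q.1 * diaFold q.2) = brk x q.1 * diaFold (y :: q.2) :=
      fun q hq => dia_mul_of_mem_center (hL _ (List.fst_mem_of_mem_picks hq)) _ _
    rw [diaFold_cons, brk_dia_right, dia_of_mem_center_left (hx y (by simp)), ih hL, dia_list_sum,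
      List.map_congr_left hcomm]
    simp [List.picks, Function.comp_def]

theorem diaFold_perm {L L' : List A} (hL : CommutatorsCentral L) (h : L.Perm L') :
    diaFold L = diaFold L' := by
  induction h with
  | nil => rfl
  | cons x _ ih =>
    exact congrArg (dia x) (ih (hL.subset (List.subset_cons_self x _)))
  | swap x y L => exact dia_left_comm (hL y (by simp) x (by simp)) _
  | trans h₁ _ ih₁ ih₂ => exact (ih₁ hL).trans (ih₂ (hL.subset h₁.symm.subset))

theorem sum_picks_brk_diaFold {K : List A} (hK : CommutatorsCentral K) :
    (K.picks.map fun p => brk p.1 (diaFold p.2)).sum = 0 := by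
  induction K with
  | nil => rfl
  | cons x L ih =>
    have hL := hK.subset (List.subset_cons_self x L)
    have hterm : ∀ q ∈ L.picks, brk q.1 (diaFold (x :: q.2)) =
        brk q.1 x * diaFold q.2 + dia x (brk q.1 (diaFold q.2)) := by
      intro q hq
      have hq : q.1 ∈ x :: L := List.mem_cons_of_mem x (List.fst_mem_of_mem_picks hq)
      rw [diaFold_cons, brk_dia_right, dia_of_mem_center_left (hK _ hq _ List.mem_cons_self)]
    have hx : ∀ a ∈ L, brk x a ∈ Set.center A := fun a ha => hK x (by simp) a (by simp [ha])
    calc ((x :: L).picks.map fun p => brk p.1 (diaFold p.2)).sum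
        = (L.picks.map fun q => (brk x q.1 + brk q.1 x) * diaFold q.2).sum +
            dia x (L.picks.map fun q => brk q.1 (diaFold q.2)).sum := by
          simp only [List.picks, List.map_cons, List.sum_cons, List.map_map, Function.comp_def]
          rw [List.map_congr_left hterm, brk_diaFold hx, dia_list_sum, List.sum_map_add,
            ← add_assoc, ← List.sum_map_add]
          simp only [add_mul]
      _ = 0 := by simp [brk_add_brk_swap, ih hL, dia]

theorem sum_picks_mul_diaFold {K : List A} (hK : CommutatorsCentral K) :
    (K.picks.map fun p => p.1 * diaFold p.2).sum = K.length • diaFold K := by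
  have hterm : ∀ p ∈ K.picks,
      p.1 * diaFold p.2 = diaFold K + (2⁻¹ : ℚ) • brk p.1 (diaFold p.2) := fun p hp => by
    rw [mul_eq_dia_add_brk, ← diaFold_cons, diaFold_perm hK (List.perm_of_mem_picks hp).symm]
  rw [List.map_congr_left hterm, List.sum_map_add, List.map_const', List.sum_replicate,
    List.length_picks, List.sum_map_smul, sum_picks_brk_diaFold hK, smul_zero, add_zero]

theorem symP_eq_diaFold {K : List A} (hK : CommutatorsCentral K) : symP K = diaFold K := by
  induction hn : K.length using Nat.strong_induction_on generalizing K with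
  | _ n ih =>
    cases K with
    | nil => simp [symP_nil, diaFold]
    | cons x L =>
      have := IsAddTorsionFree.of_module_rat A
      apply nsmul_right_injective (n := (x :: L).length) (by simp)
      dsimp only
      rw [← sum_picks_mul_symP, ← sum_picks_mul_diaFold hK]
      refine congrArg List.sum (List.map_congr_left fun p hp => ?_)
      have hlen : p.2.length < n := by simp [← hn, ← (List.perm_of_mem_picks hp).length_eq]
      rw [ih _ hlen (hK.subset (List.snd_subset_of_mem_picks hp)) rfl]

theorem symP_cons {x : A} {L : List A} (h : CommutatorsCentral (x :: L)) :
    symP (x :: L) = dia x (symP L) := by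
  rw [symP_eq_diaFold h, symP_eq_diaFold (h.subset (List.subset_cons_self x L)), diaFold_cons]

end CentralCommutators

section Symmetrization

open MvPolynomial

section MonomialList

variable {α : Type*} {l : ℕ} (B : Fin l → α)

def monomialList (s : Fin l →₀ ℕ) : List α :=
  (List.ofFn fun i => List.replicate (s i) (B i)).flatten

theorem coe_monomialList (s : Fin l →₀ ℕ) :
    (monomialList B s : Multiset α) = ∑ i, Multiset.replicate (s i) (B i) := by
  rw [monomialList, ← Multiset.coe_join, List.map_ofFn, Multiset.join, Multiset.sum_coe,
    List.sum_ofFn]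
  simp [Multiset.coe_replicate]

theorem monomialList_zero : monomialList B 0 = [] := by
  simp [monomialList]

theorem monomialList_add_single_perm (s : Fin l →₀ ℕ) (i : Fin l) :
    (monomialList B (s + Finsupp.single i 1)).Perm (B i :: monomialList B s) := by
  have hsingle : ∑ j, Multiset.replicate (Finsupp.single i 1 j) (B j) = {B i} := by
    rw [Finset.sum_eq_single i (fun j _ hj => by simp [Ne.symm hj]) (by simp),
      Finsupp.single_eq_same, Multiset.replicate_one]
  rw [← Multiset.coe_eq_coe, ← Multiset.cons_coe, coe_monomialList, coe_monomialList]
  simp only [Finsupp.add_apply, Multiset.replicate_add, Finset.sum_add_distrib]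
  rw [hsingle, add_comm, Multiset.singleton_add]

theorem mem_monomialList {s : Fin l →₀ ℕ} {a : α} (ha : a ∈ monomialList B s) :
    a ∈ Set.range B := by
  obtain ⟨_, hL, ha⟩ := List.mem_flatten.mp ha
  obtain ⟨i, rfl⟩ := List.mem_ofFn.mp hL
  exact ⟨i, (List.eq_of_mem_replicate ha).symm⟩

end MonomialList

variable {A : Type*} [Ring A] [Algebra ℚ A] {l : ℕ} {B : Fin l → A}

theorem symmQ_monomial (s : Fin l →₀ ℕ) (q : ℚ) :
    symmQ B (monomial s q) = q • symP (monomialList B s) :=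
  sum_monomial_eq (zero_smul ℚ _)

theorem symmQ_add (P Q : MvPolynomial (Fin l) ℚ) : symmQ B (P + Q) = symmQ B P + symmQ B Q :=
  Finsupp.sum_add_index (fun _ _ => zero_smul ℚ _) (fun _ _ _ _ => add_smul _ _ _)

theorem symmQ_zero : symmQ B 0 = 0 :=
  Finsupp.sum_zero_index

theorem symmQ_smul (q : ℚ) (P : MvPolynomial (Fin l) ℚ) : symmQ B (q • P) = q • symmQ B P := by
  rw [symmQ, symmQ, Finsupp.smul_sum]
  exact (Finsupp.sum_smul_index fun _ => by rw [zero_smul]).trans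
    (Finsupp.sum_congr fun _ _ => by rw [mul_smul])

theorem symmQ_C (q : ℚ) : symmQ B (C q) = algebraMap ℚ A q := by
  rw [← monomial_zero', symmQ_monomial, monomialList_zero, symP_nil, Algebra.algebraMap_eq_smul_one]

theorem symmQ_mul_X (hB : ∀ i j, brk (B i) (B j) ∈ Set.center A) (i : Fin l)
    (P : MvPolynomial (Fin l) ℚ) : symmQ B (P * X i) = dia (B i) (symmQ B P) := by
  induction P using MvPolynomial.induction_on' with
  | monomial s q =>
    have hcentral : CommutatorsCentral (B i :: monomialList B s) :=
      commutatorsCentral_of_subset_range hB fun a ha => by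
        rcases List.mem_cons.mp ha with rfl | ha
        exacts [⟨i, rfl⟩, mem_monomialList B ha]
    rw [X, monomial_mul, mul_one, symmQ_monomial, symmQ_monomial,
      symP_perm (monomialList_add_single_perm B s i), symP_cons hcentral, dia_smul_right]
  | add P Q hP hQ => rw [add_mul, symmQ_add, symmQ_add, hP, hQ, dia_add_right]

theorem symmQ_X (hB : ∀ i j, brk (B i) (B j) ∈ Set.center A) (i : Fin l) :
    symmQ B (X i) = B i := by
  rw [← one_mul (X i), symmQ_mul_X hB, ← C_1, symmQ_C, map_one, dia_one_right]

end Symmetrization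

section PoissonBracket

open MvPolynomial

variable {l : ℕ} (c : Fin l → Fin l → ℚ)

noncomputable def poisDeriv (j : Fin l) :
    Derivation ℚ (MvPolynomial (Fin l) ℚ) (MvPolynomial (Fin l) ℚ) :=
  ∑ k, c j k • pderiv k

theorem poisDeriv_apply (j : Fin l) (P : MvPolynomial (Fin l) ℚ) :
    poisDeriv c j P = ∑ k, c j k • pderiv k P := by
  simp only [poisDeriv, ← Derivation.coeFnAddMonoidHom_apply, map_sum, Finset.sum_apply]
  rfl

theorem poisDeriv_X (j i : Fin l) : poisDeriv c j (X i) = C (c j i) := by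
  simp [poisDeriv_apply, pderiv_X, Pi.single_apply, C_eq_smul_one]

theorem poisC_eq_sum_pderiv_mul (g f : MvPolynomial (Fin l) ℚ) :
    poisC c g f = ∑ i, pderiv i g * poisDeriv c i f := by
  simp only [poisC, poisDeriv_apply, Finset.mul_sum, smul_eq_C_mul]
  exact Finset.sum_congr rfl fun i _ => Finset.sum_congr rfl fun j _ => by ring

theorem poisC_add_left (g₁ g₂ f : MvPolynomial (Fin l) ℚ) :
    poisC c (g₁ + g₂) f = poisC c g₁ f + poisC c g₂ f := by
  simp [poisC_eq_sum_pderiv_mul, add_mul, Finset.sum_add_distrib]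

theorem poisC_smul_left (q : ℚ) (g f : MvPolynomial (Fin l) ℚ) :
    poisC c (q • g) f = q • poisC c g f := by
  simp [poisC_eq_sum_pderiv_mul, Finset.smul_sum]

theorem poisC_one_left (f : MvPolynomial (Fin l) ℚ) : poisC c 1 f = 0 := by
  simp [poisC_eq_sum_pderiv_mul]

theorem poisC_X_left (j : Fin l) (f : MvPolynomial (Fin l) ℚ) :
    poisC c (X j) f = poisDeriv c j f := by
  simp [poisC_eq_sum_pderiv_mul, pderiv_X, Pi.single_apply]

theorem poisC_X_mul_X_left (i j : Fin l) (f : MvPolynomial (Fin l) ℚ) :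
    poisC c (X i * X j) f = poisDeriv c i f * X j + poisDeriv c j f * X i := by
  simp [poisC_eq_sum_pderiv_mul, pderiv_X, Pi.single_apply, add_mul, Finset.sum_add_distrib]
  ring

end PoissonBracket

section BracketCompatible

open MvPolynomial

variable {A : Type*} [Ring A] [Algebra ℚ A] {l : ℕ} {B : Fin l → A} {c : Fin l → Fin l → ℚ}

theorem brk_mem_center_of_eq_smul_one (hB : ∀ i j, brk (B i) (B j) = c i j • (1 : A))
    (i j : Fin l) : brk (B i) (B j) ∈ Set.center A :=
  hB i j ▸ Set.smul_mem_center _ Set.one_mem_center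

theorem brk_symmQ (hB : ∀ i j, brk (B i) (B j) = c i j • (1 : A)) (j : Fin l)
    (P : MvPolynomial (Fin l) ℚ) : brk (B j) (symmQ B P) = symmQ B (poisDeriv c j P) := by
  induction P using MvPolynomial.induction_on with
  | C q =>
    rw [symmQ_C, brk_of_mem_center_right (Set.algebraMap_mem_center q), ← algebraMap_eq,
      Derivation.map_algebraMap, symmQ_zero]
  | add P Q hP hQ => rw [symmQ_add, brk_add_right, hP, hQ, map_add, symmQ_add]
  | mul_X P i hP =>
    have hB' := brk_mem_center_of_eq_smul_one hB
    rw [symmQ_mul_X hB', brk_dia_right, hP, hB,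
      dia_of_mem_center_left (Set.smul_mem_center _ Set.one_mem_center), smul_one_mul,
      ← symmQ_mul_X hB', ← symmQ_smul, ← symmQ_add]
    congr 1
    rw [Derivation.leibniz, poisDeriv_X, smul_eq_mul, smul_eq_mul, ← C_mul']
    ring

variable (B c) in
def bracketCompatible (f : MvPolynomial (Fin l) ℚ) : Submodule ℚ (MvPolynomial (Fin l) ℚ) where
  carrier := {g | brk (symmQ B g) (symmQ B f) = symmQ B (poisC c g f)}
  add_mem' {g₁ g₂} h₁ h₂ := by
    simp only [Set.mem_ofPred_eq, symmQ_add, brk_add_left, poisC_add_left] at *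
    rw [h₁, h₂]
  zero_mem' := by simp [symmQ_zero, poisC, brk]
  smul_mem' q g h := by
    simp only [Set.mem_ofPred_eq, symmQ_smul, brk_smul_left, poisC_smul_left] at *
    rw [h]

theorem one_mem_bracketCompatible (f : MvPolynomial (Fin l) ℚ) : 1 ∈ bracketCompatible B c f := by
  show brk _ _ = _
  rw [← C_1, symmQ_C, map_one, brk_of_mem_center_left Set.one_mem_center, C_1, poisC_one_left,
    symmQ_zero]

theorem X_mem_bracketCompatible (hB : ∀ i j, brk (B i) (B j) = c i j • (1 : A)) (j : Fin l)
    (f : MvPolynomial (Fin l) ℚ) : X j ∈ bracketCompatible B c f := by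
  show brk _ _ = _
  rw [symmQ_X (brk_mem_center_of_eq_smul_one hB), brk_symmQ hB, poisC_X_left]

theorem X_mul_X_mem_bracketCompatible (hB : ∀ i j, brk (B i) (B j) = c i j • (1 : A))
    (i j : Fin l) (f : MvPolynomial (Fin l) ℚ) : X i * X j ∈ bracketCompatible B c f := by
  show brk _ _ = _
  have hB' := brk_mem_center_of_eq_smul_one hB
  rw [symmQ_mul_X hB', symmQ_X hB', brk_dia_left, brk_symmQ hB, brk_symmQ hB, ← symmQ_mul_X hB',
    ← symmQ_mul_X hB', ← symmQ_add, poisC_X_mul_X_left]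

end BracketCompatible

open MvPolynomial in
theorem stmt19_general {A : Type*} [Ring A] [Algebra ℚ A] {l : ℕ}
    (B : Fin l → A) (c : Fin l → Fin l → ℚ)
    (hB : ∀ i j, brk (B i) (B j) = c i j • (1 : A))
    (a : Fin l → Fin l → ℚ) (b : Fin l → ℚ) (c₀ : ℚ)
    (h f : MvPolynomial (Fin l) ℚ)
    (hh : h = (∑ i : Fin l, ∑ j : Fin l, if i ≤ j then C (a i j) * (X i * X j) else 0)
        + (∑ j : Fin l, C (b j) * X j) + C c₀) :
    brk (symmQ B h) (symmQ B f) = symmQ B (poisC c h f) := by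
  change h ∈ bracketCompatible B c f
  subst hh
  simp only [C_mul']
  rw [C_eq_smul_one]
  refine add_mem (add_mem (Submodule.sum_mem _ fun i _ => Submodule.sum_mem _ fun j _ => ?_)
    (Submodule.sum_mem _ fun j _ => Submodule.smul_mem _ _ (X_mem_bracketCompatible hB j f)))
    (Submodule.smul_mem _ _ (one_mem_bracketCompatible f))
  split_ifs
  · exact Submodule.smul_mem _ _ (X_mul_X_mem_bracketCompatible hB i j f)
  · exact zero_mem _

open MvPolynomial in
theorem stmt19 {A : Type*} [Ring A] [Algebra ℚ A] {l m : ℕ}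
    (B : Fin l → A) (c : Fin l → Fin l → ℚ)
    (hanti : ∀ i j, c i j = - c j i)
    (hB : ∀ i j, brk (B i) (B j) = c i j • (1 : A))
    (a : Fin l → Fin l → ℚ) (b : Fin l → ℚ) (c₀ : ℚ) (js : Fin m → Fin l)
    (h f : MvPolynomial (Fin l) ℚ)
    (hh : h = (∑ i : Fin l, ∑ j : Fin l, if i ≤ j then C (a i j) * (X i * X j) else 0)
        + (∑ j : Fin l, C (b j) * X j) + C c₀)
    (hf : f = ∏ r : Fin m, X (js r)) :
    brk (symmQ B h) (symmQ B f) = symmQ B (poisC c h f) :=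
  stmt19_general B c hB a b c₀ h f hh
end
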